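/- Let T₁ : (ℂ \ {0})³ → (ℂ \ {0})³ be the map T₁(x,y,z) = (y, x, y·z·x⁻¹), and let P(x,y,z) be the antisymmetric 3×3 matrix with entries P₁₂ = 0, P₁₃ = (1/2)·x·(x − y), P₂₃ = −(1/2)·x·(x − y) (and Pⱼᵢ = −Pᵢⱼ, Pᵢᵢ = 0). Let J(x,y,z) denote the Jacobian matrix of T₁, namely J = [[0,1,0],[1,0,0],[−y·z·x⁻², z·x⁻¹, y·x⁻¹]]. Then the Poisson structure defined by P is invariant under T₁: for all (x,y,z) ∈ (ℂ \ {0})³, J(x,y,z) · P(x,y,z) · J(x,y,z)ᵀ = P(T₁(x,y,z)). Moreover C₁(x,y,z) = x + y satisfies C₁ ∘ T₁ = C₁ and is a Casimir of P (its gradient lies in the kernel of P at every point), and I₁(x,y,z) = x⁻¹·z satisfies I₁ ∘ T₁ = I₁. -/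

import Mathlib

noncomputable section

section Tetra

variable {X : Type*}

/-- `T` acting on factors 1,2,3 of `X⁶`. -/
def lift123 (T : X × X × X → X × X × X) :
    X × X × X × X × X × X → X × X × X × X × X × X
  | (a, b, c, d, e, f) =>
    match T (a, b, c) with
    | (a', b', c') => (a', b', c', d, e, f)

/-- `T` acting on factors 1,4,5 of `X⁶`. -/
def lift145 (T : X × X × X → X × X × X) :
    X × X × X × X × X × X → X × X × X × X × X × X
  | (a, b, c, d, e, f) =>
    match T (a, d, e) with
    | (a', d', e') => (a', b, c, d', e', f)

/-- `T` acting on factors 2,4,6 of `X⁶`. -/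
def lift246 (T : X × X × X → X × X × X) :
    X × X × X × X × X × X → X × X × X × X × X × X
  | (a, b, c, d, e, f) =>
    match T (b, d, f) with
    | (b', d', f') => (a, b', c, d', e, f')

/-- `T` acting on factors 3,5,6 of `X⁶`. -/
def lift356 (T : X × X × X → X × X × X) :
    X × X × X × X × X × X → X × X × X × X × X × X
  | (a, b, c, d, e, f) =>
    match T (c, e, f) with
    | (c', e', f') => (a, b, c', d, e', f')

/-- The Zamolodchikov tetrahedron equation for a map `T : X³ → X³`. -/
def IsTetrahedronMap (T : X × X × X → X × X × X) : Prop :=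
  lift123 T ∘ lift145 T ∘ lift246 T ∘ lift356 T =
    lift356 T ∘ lift246 T ∘ lift145 T ∘ lift123 T

end Tetra

open Matrix

def T1 : ℂˣ × ℂˣ × ℂˣ → ℂˣ × ℂˣ × ℂˣ := fun (x, y, z) => (y, x, y * z * x⁻¹)

/-- The antisymmetric Poisson structure matrix with
`P₁₂ = 0`, `P₁₃ = (1/2)·x·(x − y)`, `P₂₃ = −(1/2)·x·(x − y)`. -/
def P (x y _z : ℂ) : Matrix (Fin 3) (Fin 3) ℂ :=
  !![0, 0, (1/2) * x * (x - y);
     0, 0, -((1/2) * x * (x - y));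
     -((1/2) * x * (x - y)), (1/2) * x * (x - y), 0]

/-- The Jacobian matrix of `T₁(x,y,z) = (y, x, y·z·x⁻¹)`. -/
def J (x y z : ℂ) : Matrix (Fin 3) (Fin 3) ℂ :=
  !![0, 1, 0;
     1, 0, 0;
     -(y * z / x ^ 2), z / x, y / x]

/-- `C₁(x,y,z) = x + y`. -/
def C1 : ℂˣ × ℂˣ × ℂˣ → ℂ := fun (x, y, _) => (x : ℂ) + (y : ℂ)

/-- `I₁(x,y,z) = x⁻¹·z`. -/
def I1 : ℂˣ × ℂˣ × ℂˣ → ℂ := fun (x, _, z) => (x : ℂ)⁻¹ * (z : ℂ)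

set_option linter.unnecessarySeqFocus false in
set_option maxHeartbeats 1000000 in
private lemma key (x y z : ℂ) (hx : x ≠ 0) :
    J x y z * P x y z * (J x y z)ᵀ = P y x (y * z * x⁻¹) := by
  ext i j
  fin_cases i <;> fin_cases j <;>
    simp [_root_.J, P, Matrix.mul_apply, Fin.sum_univ_three, Matrix.vecHead,
      Matrix.vecTail, Matrix.transpose] <;>
    field_simp <;> ring_nf <;> field_simp <;> ring

theorem T1_Liouville_data :
    (∀ x y z : ℂˣ,
      J (x : ℂ) (y : ℂ) (z : ℂ) * P (x : ℂ) (y : ℂ) (z : ℂ) *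
          (J (x : ℂ) (y : ℂ) (z : ℂ))ᵀ =
        P ((y : ℂˣ) : ℂ) ((x : ℂˣ) : ℂ) (((y * z * x⁻¹ : ℂˣ)) : ℂ)) ∧
    (C1 ∘ T1 = C1) ∧
    (∀ x y z : ℂˣ, P (x : ℂ) (y : ℂ) (z : ℂ) *ᵥ ![1, 1, 0] = 0) ∧
    (I1 ∘ T1 = I1) := by
  refine ⟨?_, ?_, ?_, ?_⟩
  · intro x y z
    exact key (x:ℂ) (y:ℂ) (z:ℂ) x.ne_zero
  · funext p
    obtain ⟨x, y, z⟩ := p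
    simp [C1, T1]
    ring
  · intro x y z
    funext i
    fin_cases i <;>
      simp [P, Matrix.mulVec, dotProduct, Fin.sum_univ_three]
  · funext p
    obtain ⟨x, y, z⟩ := p
    have hx : (x:ℂ) ≠ 0 := x.ne_zero
    have hy : (y:ℂ) ≠ 0 := y.ne_zero
    simp only [I1, T1, Function.comp_apply, Units.val_mul]
    field_simp
    exact x.inv_mul
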